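/- Let G be a mixed graph whose underlying graph is the complete graph K_n with n ≥ 4, equipped with any η-function θ. Then G is not periodic: there is no positive integer τ with U_θ^τ = I. -/

import Mathlib

/-!
If `U ^ τ = 1` then the eigenvalues of `U` are roots of unity, hence algebraic integers, so every
coefficient of the characteristic polynomial of `U` is an algebraic integer; a rational one is
then an integer. For the coefficient `e₂ = ((tr U) ^ 2 - tr (U ^ 2)) / 2` of `K_n` this fails:
`tr U = 0`, and `U a b * U b a` vanishes unless `b` is the reverse arc of `a`, where the phases
`exp (∓ i θ)` cancel, so `tr (U ^ 2) = n (n - 1) (2 / (n - 1) - 1) ^ 2` and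
`e₂ = -n (n - 3) ^ 2 / (2 (n - 1))`. If this were an integer, `n - 1` would divide
`n (n - 3) ^ 2 ≡ 4`, leaving `n = 5`, where `e₂ = -5/2`.
-/

/-- The reverse of an arc. -/
def arcRev {α : Type*} (a : α × α) : α × α := (a.2, a.1)

/-- The set of symmetric arcs 𝒜⁺ = 𝒜 ∪ 𝒜⁻¹ of a mixed graph given by its arc set. -/
def symArcs {n : ℕ} (A : Finset (Fin n × Fin n)) : Finset (Fin n × Fin n) :=
  A ∪ A.image arcRev

/-- The degree of a vertex in the underlying graph of a mixed graph. -/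
def mixedDeg {n : ℕ} (A : Finset (Fin n × Fin n)) (x : Fin n) : ℕ :=
  ((symArcs A).filter (fun a => a.1 = x)).card

/-- The η-function θ of a mixed graph: η on 𝒜 \ 𝒜⁻¹, -η on 𝒜⁻¹ \ 𝒜, 0 on 𝒜 ∩ 𝒜⁻¹. -/
def etaFun {n : ℕ} (A : Finset (Fin n × Fin n)) (η : ℝ) (a : Fin n × Fin n) : ℝ :=
  if a ∈ A then (if arcRev a ∈ A then 0 else η) else -η

/-- The time evolution matrix U_θ of a mixed graph equipped with an η-function. -/
noncomputable def timeEvo {n : ℕ} (A : Finset (Fin n × Fin n)) (η : ℝ) :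
    Matrix {a // a ∈ symArcs A} {a // a ∈ symArcs A} ℂ :=
  fun a b => Complex.exp (-(etaFun A η a.1) * Complex.I) *
    ((2 / (mixedDeg A b.1.2 : ℂ)) * (if a.1.1 = b.1.2 then 1 else 0) -
      (if a.1 = arcRev b.1 then 1 else 0))

open Polynomial Matrix

theorem Finset.sum_powersetCard_two_sum_sum {ι M : Type*} [Fintype ι] [DecidableEq ι]
    [AddCommMonoid M] (g : ι → ι → M) (hg : ∀ i, g i i = 0) :
    ∑ s ∈ univ.powersetCard 2, ∑ i ∈ s, ∑ j ∈ s, g i j = ∑ i, ∑ j, g i j := by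
  have hpair : ∀ i j, ∑ s ∈ univ.powersetCard 2, (if i ∈ s ∧ j ∈ s then g i j else 0) = g i j := by
    intro i j
    rcases eq_or_ne i j with rfl | hij
    · simp [hg]
    rw [Finset.sum_eq_single_of_mem {i, j} (by simp [Finset.card_pair hij])]
    · simp
    · intro s hs hne
      rw [if_neg]
      rintro ⟨hi, hj⟩
      exact hne ((Finset.eq_of_subset_of_card_le (Finset.insert_subset hi (by simpa using hj))
        (by rw [(Finset.mem_powersetCard.1 hs).2, Finset.card_pair hij])).symm)
  calc ∑ s ∈ univ.powersetCard 2, ∑ i ∈ s, ∑ j ∈ s, g i j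
      = ∑ s ∈ univ.powersetCard 2, ∑ i, ∑ j, (if i ∈ s ∧ j ∈ s then g i j else 0) := by
        simp [ite_and, Finset.sum_ite_irrel]
    _ = ∑ i, ∑ j, ∑ s ∈ univ.powersetCard 2, (if i ∈ s ∧ j ∈ s then g i j else 0) := by
        rw [Finset.sum_comm]; exact Finset.sum_congr rfl fun i _ => Finset.sum_comm
    _ = ∑ i, ∑ j, g i j := by simp only [hpair]

namespace Matrix

variable {ι R : Type*} [Fintype ι] [DecidableEq ι] [CommRing R]

theorem two_mul_det_of_card_eq_two (M : Matrix ι ι R) (h : Fintype.card ι = 2) :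
    2 * M.det = M.trace ^ 2 - (M ^ 2).trace := by
  nontriviality R
  have hCH := congrArg trace M.aeval_self_charpoly
  simp only [M.charpoly_of_card_eq_two h, map_add, map_sub, map_mul, aeval_C, aeval_X_pow,
    aeval_X, Algebra.algebraMap_eq_smul_one, smul_mul_assoc, one_mul, trace_add, trace_sub,
    trace_smul, trace_one, h, trace_zero, smul_eq_mul, Nat.cast_ofNat] at hCH
  linear_combination hCH

theorem two_mul_charpoly_coeff_card_sub_two (M : Matrix ι ι R) (h : 2 ≤ Fintype.card ι) :
    2 * M.charpoly.coeff (Fintype.card ι - 2) = M.trace ^ 2 - (M ^ 2).trace := by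
  have hminor : ∀ s ∈ Finset.univ.powersetCard 2,
      2 * (M.submatrix (Subtype.val : s → ι) Subtype.val).det =
        ∑ i ∈ s, ∑ j ∈ s, (M i i * M j j - M i j * M j i) := by
    intro s hs
    rw [two_mul_det_of_card_eq_two _ (by simpa using (Finset.mem_powersetCard.1 hs).2)]
    simp only [trace, diag, submatrix_apply, sq, mul_apply, Finset.sum_mul_sum,
      ← Finset.sum_sub_distrib]
    rw [← Finset.sum_coe_sort s]
    refine Finset.sum_congr rfl fun i _ => ?_
    rw [← Finset.sum_coe_sort s]
  rw [charpoly_coeff_eq_sum_minors M 2 h, neg_one_sq, one_mul, Finset.mul_sum,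
    Finset.sum_congr rfl hminor, Finset.sum_powersetCard_two_sum_sum _ (fun i => sub_self _)]
  simp [trace, sq, Matrix.mul_apply, Finset.sum_mul_sum, Finset.sum_sub_distrib]

end Matrix

theorem isIntegral_charpoly_coeff_of_pow_eq_one {ι K : Type*} [Fintype ι] [DecidableEq ι]
    [Field K] [IsAlgClosed K] {U : Matrix ι ι K} {τ : ℕ} (hτ : 0 < τ) (hU : U ^ τ = 1)
    (k : ℕ) : IsIntegral ℤ (U.charpoly.coeff k) := by
  refine isIntegral_coeff_of_factors _ (U.charpoly_monic.leadingCoeff ▸ isIntegral_one)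
    (IsAlgClosed.splits _) (fun z hz => ⟨(X ^ τ - 1 : ℤ[X]), monic_X_pow_sub_C 1 hτ.ne', ?_⟩) k
  have hzτ : z ^ τ ∈ spectrum K (U ^ τ) :=
    spectrum.pow_mem_pow U τ (mem_spectrum_iff_isRoot_charpoly.2 hz)
  rcases subsingleton_or_nontrivial (Matrix ι ι K) with _ | _
  · simp [spectrum.of_subsingleton] at hzτ
  rw [hU, spectrum.one_eq, Set.mem_singleton_iff] at hzτ
  simp [hzτ]

theorem intCast_ne_mul_sub_three_sq_div {n : ℕ} (hn : 4 ≤ n) (k : ℤ) :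
    (k : ℚ) ≠ n * (n - 3) ^ 2 / (2 * (n - 1)) := by
  intro hk
  have hn1 : 2 * ((n : ℚ) - 1) ≠ 0 := by
    have : (4 : ℚ) ≤ n := by exact_mod_cast hn
    linarith
  rw [eq_div_iff hn1] at hk
  have hkZ : k * (2 * ((n : ℤ) - 1)) = n * (n - 3) ^ 2 := by exact_mod_cast hk
  have hdvd : (n : ℤ) - 1 ∣ 4 := ⟨2 * k - (n ^ 2 - 5 * n + 4), by linear_combination -hkZ⟩
  have : n ≤ 5 := by have := Int.le_of_dvd (by norm_num) hdvd; omega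
  interval_cases n <;> omega

@[simp] theorem arcRev_arcRev {α : Type*} (a : α × α) : arcRev (arcRev a) = a := rfl

section MixedGraph

variable {n : ℕ} {A : Finset (Fin n × Fin n)}

theorem arcRev_mem_symArcs {a : Fin n × Fin n} (h : a ∈ symArcs A) : arcRev a ∈ symArcs A := by
  rcases Finset.mem_union.1 h with ha | ha
  · exact Finset.mem_union_right _ (Finset.mem_image_of_mem _ ha)
  · obtain ⟨b, hb, rfl⟩ := Finset.mem_image.1 ha
    exact Finset.mem_union_left _ hb

theorem etaFun_arcRev (η : ℝ) {a : Fin n × Fin n} (h : a ∈ symArcs A) :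
    etaFun A η (arcRev a) = -etaFun A η a := by
  have hmem : a ∈ A ∨ arcRev a ∈ A := by
    rcases Finset.mem_union.1 h with ha | ha
    · exact Or.inl ha
    · obtain ⟨b, hb, rfl⟩ := Finset.mem_image.1 ha
      exact Or.inr hb
  by_cases ha : a ∈ A <;> by_cases hr : arcRev a ∈ A <;> simp_all [etaFun]

theorem fst_ne_snd_of_mem_symArcs (hirr : ∀ x : Fin n, (x, x) ∉ A) {a : Fin n × Fin n}
    (h : a ∈ symArcs A) : a.1 ≠ a.2 := by
  rintro heq
  rcases Finset.mem_union.1 h with ha | ha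
  · exact hirr a.1 (by rwa [show a = (a.1, a.1) from Prod.ext rfl heq.symm] at ha)
  · obtain ⟨b, hb, rfl⟩ := Finset.mem_image.1 ha
    exact hirr b.1 (by rwa [show b = (b.1, b.1) from Prod.ext rfl heq] at hb)

theorem timeEvo_apply_eq_zero (η : ℝ) {a b : {a // a ∈ symArcs A}} (h : a.1.1 ≠ b.1.2) :
    timeEvo A η a b = 0 := by
  have hrev : a.1 ≠ arcRev b.1 := fun he => h (by rw [he]; rfl)
  simp [timeEvo, h, hrev]

theorem timeEvo_apply_arcRev (η : ℝ) (a : {a // a ∈ symArcs A}) :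
    timeEvo A η a ⟨arcRev a.1, arcRev_mem_symArcs a.2⟩ =
      Complex.exp (-(etaFun A η a.1) * Complex.I) * (2 / (mixedDeg A a.1.1 : ℂ) - 1) := by
  simp [timeEvo, arcRev]

theorem trace_timeEvo (hirr : ∀ x : Fin n, (x, x) ∉ A) (η : ℝ) :
    (timeEvo A η).trace = 0 :=
  Finset.sum_eq_zero fun a _ => timeEvo_apply_eq_zero η (fst_ne_snd_of_mem_symArcs hirr a.2)

theorem timeEvo_sq_apply_self (η : ℝ) (a : {a // a ∈ symArcs A}) :
    (timeEvo A η ^ 2) a a =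
      (2 / (mixedDeg A a.1.1 : ℂ) - 1) * (2 / (mixedDeg A a.1.2 : ℂ) - 1) := by
  set ra : {a // a ∈ symArcs A} := ⟨arcRev a.1, arcRev_mem_symArcs a.2⟩
  -- `U a b * U b a ≠ 0` forces `b.2 = a.1` and `b.1 = a.2`, i.e. `b = ra`.
  rw [sq, mul_apply, Finset.sum_eq_single ra]
  · have hback : timeEvo A η ra a = Complex.exp (-(etaFun A η (arcRev a.1)) * Complex.I) *
        (2 / (mixedDeg A a.1.2 : ℂ) - 1) := timeEvo_apply_arcRev η ra
    rw [timeEvo_apply_arcRev, hback, etaFun_arcRev η a.2]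
    calc _ = Complex.exp (-(etaFun A η a.1) * Complex.I + etaFun A η a.1 * Complex.I) *
          ((2 / (mixedDeg A a.1.1 : ℂ) - 1) * (2 / (mixedDeg A a.1.2 : ℂ) - 1)) := by
          rw [Complex.exp_add]; push_cast; rw [neg_neg]; ring
      _ = _ := by rw [neg_mul, neg_add_cancel, Complex.exp_zero, one_mul]
  · intro b _ hb
    by_cases h1 : a.1.1 = b.1.2
    · have h2 : b.1.1 ≠ a.1.2 := fun h2 => hb (Subtype.ext (Prod.ext h2 h1.symm))
      rw [timeEvo_apply_eq_zero η h2, mul_zero]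
    · rw [timeEvo_apply_eq_zero η h1, zero_mul]
  · simp

theorem trace_timeEvo_sq (η : ℝ) :
    (timeEvo A η ^ 2).trace =
      ∑ a : {a // a ∈ symArcs A},
        (2 / (mixedDeg A a.1.1 : ℂ) - 1) * (2 / (mixedDeg A a.1.2 : ℂ) - 1) :=
  Finset.sum_congr rfl fun a _ => timeEvo_sq_apply_self η a

section Complete

variable (hirr : ∀ x : Fin n, (x, x) ∉ A)
  (hcomplete : ∀ x y : Fin n, x ≠ y → (x, y) ∈ symArcs A)
include hirr hcomplete

theorem symArcs_eq_offDiag : symArcs A = Finset.univ.offDiag := by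
  ext a
  refine ⟨fun h => by simpa using fst_ne_snd_of_mem_symArcs hirr h, fun h => ?_⟩
  simpa using hcomplete a.1 a.2 (Finset.mem_offDiag.1 h).2.2

theorem mixedDeg_eq_of_complete (x : Fin n) : mixedDeg A x = n - 1 := by
  have hfiber : Finset.univ.offDiag.filter (fun a : Fin n × Fin n => a.1 = x) =
      {x} ×ˢ Finset.univ.erase x := by
    ext a; simp [Finset.mem_offDiag]; grind
  rw [mixedDeg, symArcs_eq_offDiag hirr hcomplete, hfiber]
  simp

theorem card_symArcs_of_complete : (symArcs A).card = n * (n - 1) := by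
  rw [symArcs_eq_offDiag hirr hcomplete, Finset.offDiag_card, Nat.mul_sub_one]
  simp

theorem charpoly_coeff_timeEvo_of_complete (hn : 2 ≤ n) (η : ℝ) :
    (timeEvo A η).charpoly.coeff (Fintype.card {a // a ∈ symArcs A} - 2) =
      ((-(n * (n - 3) ^ 2 / (2 * (n - 1))) : ℚ) : ℂ) := by
  have hcard : Fintype.card {a // a ∈ symArcs A} = n * (n - 1) := by
    simp [card_symArcs_of_complete hirr hcomplete]
  have h2 := two_mul_charpoly_coeff_card_sub_two (timeEvo A η)
    (by rw [hcard]; exact Nat.mul_le_mul hn (by omega : 1 ≤ n - 1))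
  simp only [trace_timeEvo hirr, trace_timeEvo_sq, mixedDeg_eq_of_complete hirr hcomplete,
    Finset.sum_const, Finset.card_univ, hcard, nsmul_eq_mul] at h2
  have hne : (n : ℂ) - 1 ≠ 0 := by
    rw [sub_ne_zero, ← Nat.cast_one, Ne, Nat.cast_inj]; omega
  rw [hcard]
  push_cast [Nat.cast_sub (by omega : 1 ≤ n)] at h2 ⊢
  field_simp at h2 ⊢
  linear_combination h2

end Complete

end MixedGraph

/-- a mixed complete graph on n ≥ 4 vertices is not periodic, for any
η-function. -/
theorem mixed_complete_not_periodic (n : ℕ) (hn : 4 ≤ n)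
    (A : Finset (Fin n × Fin n)) (hirr : ∀ x : Fin n, (x, x) ∉ A)
    (hcomplete : ∀ x y : Fin n, x ≠ y → (x, y) ∈ symArcs A) (η : ℝ) :
    ¬ ∃ τ : ℕ, 0 < τ ∧ timeEvo A η ^ τ = 1 := by
  rintro ⟨τ, hτ, hU⟩
  have hcoeff := charpoly_coeff_timeEvo_of_complete hirr hcomplete (by omega) η
  obtain ⟨k, hk⟩ := (isIntegral_charpoly_coeff_of_pow_eq_one hτ hU _).exists_int_iff_exists_rat.1
    ⟨_, hcoeff⟩
  rw [hcoeff] at hk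
  have hkQ : (-(n * (n - 3) ^ 2 / (2 * (n - 1))) : ℚ) = k := by exact_mod_cast hk
  exact intCast_ne_mul_sub_three_sq_div hn (-k) (by push_cast; linarith)
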